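/- Let T ⊂ ℝ² be the right triangle with vertices (0,0), (2,0), and (0,1) (legs of lengths 1 and 2 and hypotenuse √5). Then there exist five isometries g₁, …, g₅ of the Euclidean plane such that the five images g₁(T), …, g₅(T) have pairwise disjoint interiors and their union equals the inflated triangle √5·T = {√5·x : x ∈ T}, i.e. the right triangle with vertices (0,0), (2√5,0), and (0,√5). -/

import Mathlib

/-- The pinwheel prototile: the right triangle with vertices (0,0), (2,0), (0,1)
(legs 1 and 2, hypotenuse √5) in the Euclidean plane. -/
noncomputable def pinwheelTriangle : Set (EuclideanSpace ℝ (Fin 2)) :=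
  convexHull ℝ {(!₂[0, 0] : EuclideanSpace ℝ (Fin 2)), !₂[2, 0], !₂[0, 1]}

/-!
Drop the altitude from the right angle of `T` onto the hypotenuse: it cuts `T` into two
triangles similar to `T` with ratios `1 / √5` and `2 / √5`, and the midlines cut the larger one
into four triangles similar to `T` with ratio `1 / √5`. So `T` is the union of five copies of
`T / √5`, all with rational vertices; scaling by `√5` makes them congruent to `T`, the
congruences being glide reflections. Any two of the pieces lie on opposite sides of a line, so
their interiors are disjoint.

Each triangle is listed as (right angle, end of the long leg, end of the short leg), the order in
which the glide reflections map the vertices `(0,0), (2,0), (0,1)` of `T`; both subdivision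
lemmas preserve this order.
-/

open Function Set
open scoped Pointwise

section ConvexHullTriple

variable {E : Type*} [AddCommGroup E] [Module ℝ E]

theorem segment_union_segment_of_mem {b c p : E} (hp : p ∈ segment ℝ b c) :
    segment ℝ b p ∪ segment ℝ p c = segment ℝ b c := by
  rw [segment_eq_image_lineMap] at hp
  obtain ⟨t, ⟨ht₀, ht₁⟩, rfl⟩ := hp
  have hlineMap : ∀ r s : ℝ, r ≤ s →
      segment ℝ (AffineMap.lineMap b c r) (AffineMap.lineMap b c s) =
        AffineMap.lineMap b c '' Icc r s := fun r s hrs => by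
    rw [← image_segment, segment_eq_Icc hrs]
  have hb := hlineMap 0 t ht₀
  have hc := hlineMap t 1 ht₁
  have hbc := hlineMap 0 1 zero_le_one
  rw [AffineMap.lineMap_apply_zero] at hb hbc
  rw [AffineMap.lineMap_apply_one] at hc hbc
  rw [hb, hc, hbc, ← image_union, Icc_union_Icc_eq_Icc ht₀ ht₁]

theorem convexHull_triple_eq_union_of_mem_segment (a : E) {b c p : E}
    (hp : p ∈ segment ℝ b c) :
    convexHull ℝ {a, b, c} = convexHull ℝ {p, b, a} ∪ convexHull ℝ {p, a, c} := by
  have hpba : ({p, b, a} : Set E) = {a, b, p} := by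
    rw [insert_comm, pair_comm, insert_comm]
  rw [hpba, insert_comm p a]
  simp only [convexHull_insert (insert_nonempty _ _), convexHull_pair]
  rw [← convexJoin_union_right, segment_union_segment_of_mem hp]

theorem mem_convexHull_triple {a b c x : E} :
    x ∈ convexHull ℝ {a, b, c} ↔
      ∃ u v w : ℝ, 0 ≤ u ∧ 0 ≤ v ∧ 0 ≤ w ∧ u + v + w = 1 ∧ u • a + v • b + w • c = x := by
  constructor
  · simp only [convexHull_insert (insert_nonempty _ _), convexHull_pair, mem_convexJoin,
      mem_singleton_iff, exists_eq_left, segment, mem_ofPred_eq]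
    rintro ⟨y, ⟨β, γ, hβ, hγ, hβγ, rfl⟩, α, δ, hα, hδ, hαδ, rfl⟩
    refine ⟨α, δ * β, δ * γ, hα, by positivity, by positivity,
      by linear_combination δ * hβγ + hαδ, ?_⟩
    module
  · rintro ⟨u, v, w, hu, hv, hw, huvw, rfl⟩
    have hmem := (convex_convexHull ℝ {a, b, c}).sum_mem (t := Finset.univ) (w := ![u, v, w])
      (z := ![a, b, c]) (by simp [Fin.forall_fin_succ, *]) (by simp [Fin.sum_univ_three, huvw])
      (by simp [Fin.forall_fin_succ, subset_convexHull ℝ _ _])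
    simpa [Fin.sum_univ_three] using hmem

theorem convexHull_triple_subset {a b c : E} {s : Set E} (ha : a ∈ convexHull ℝ s)
    (hb : b ∈ convexHull ℝ s) (hc : c ∈ convexHull ℝ s) :
    convexHull ℝ {a, b, c} ⊆ convexHull ℝ s :=
  (convex_convexHull ℝ s).convexHull_subset_iff.2 (by simp [insert_subset_iff, *])

theorem convexHull_triple_eq_medial_union (a b c : E) :
    convexHull ℝ {a, b, c} =
      convexHull ℝ {a, midpoint ℝ a b, midpoint ℝ a c} ∪
        convexHull ℝ {midpoint ℝ a b, b, midpoint ℝ b c} ∪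
        convexHull ℝ {midpoint ℝ a c, midpoint ℝ b c, c} ∪
        convexHull ℝ {midpoint ℝ b c, midpoint ℝ a c, midpoint ℝ a b} := by
  have hv : ∀ x ∈ ({a, b, c} : Set E), x ∈ convexHull ℝ {a, b, c} :=
    fun x hx => subset_convexHull ℝ _ hx
  have hm : ∀ x ∈ ({a, b, c} : Set E), ∀ y ∈ ({a, b, c} : Set E),
      midpoint ℝ x y ∈ convexHull ℝ {a, b, c} := fun x hx y hy =>
    (convex_convexHull ℝ _).segment_subset (hv x hx) (hv y hy) (midpoint_mem_segment x y)
  refine subset_antisymm ?_ ?_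
  · intro x hx
    obtain ⟨u, v, w, hu, hv, hw, huvw, rfl⟩ := mem_convexHull_triple.1 hx
    simp only [mem_union, mem_convexHull_triple, midpoint_eq_smul_add, invOf_eq_inv]
    by_cases hu' : 1 / 2 ≤ u
    · refine .inl <| .inl <| .inl ⟨u - v - w, 2 * v, 2 * w, ?_, ?_, ?_, ?_, by module⟩ <;> linarith
    by_cases hv' : 1 / 2 ≤ v
    · refine .inl <| .inl <| .inr ⟨2 * u, v - u - w, 2 * w, ?_, ?_, ?_, ?_, by module⟩ <;> linarith
    by_cases hw' : 1 / 2 ≤ w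
    · refine .inl <| .inr ⟨2 * u, 2 * v, w - u - v, ?_, ?_, ?_, ?_, by module⟩ <;> linarith
    · refine .inr ⟨v + w - u, u + w - v, u + v - w, ?_, ?_, ?_, ?_, by module⟩ <;> linarith
  · simp only [union_subset_iff]
    refine ⟨⟨⟨?_, ?_⟩, ?_⟩, ?_⟩ <;> apply convexHull_triple_subset <;> simp [hv, hm]

end ConvexHullTriple

section Separation

theorem disjoint_interior_of_subset_halfSpaces {E : Type*} [AddCommGroup E] [TopologicalSpace E]
    [ContinuousAdd E] [Module ℝ E] [ContinuousSMul ℝ E] {f : E →L[ℝ] ℝ} (hf : f ≠ 0)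
    {c : ℝ} {s t : Set E} (hs : s ⊆ {x | f x ≤ c}) (ht : t ⊆ {x | c ≤ f x}) :
    Disjoint (interior s) (interior t) := by
  have hopen := f.isOpenMap_of_ne_zero hf
  have hs' : interior s ⊆ f ⁻¹' Iio c := by
    rw [← interior_Iic, hopen.preimage_interior_eq_interior_preimage f.continuous]
    exact interior_mono hs
  have ht' : interior t ⊆ f ⁻¹' Ioi c := by
    rw [← interior_Ici, hopen.preimage_interior_eq_interior_preimage f.continuous]
    exact interior_mono ht
  exact (Iio_disjoint_Ioi_same.preimage f).mono hs' ht'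

theorem disjoint_interior_convexHull_of_inner_le {E : Type*} [NormedAddCommGroup E]
    [InnerProductSpace ℝ E] {n : E} (hn : n ≠ 0) {c : ℝ} {s t : Set E}
    (hs : ∀ x ∈ s, inner ℝ n x ≤ c) (ht : ∀ x ∈ t, c ≤ inner ℝ n x) :
    Disjoint (interior (convexHull ℝ s)) (interior (convexHull ℝ t)) :=
  disjoint_interior_of_subset_halfSpaces (f := innerSL ℝ n)
    (DFunLike.ne_iff.2 ⟨n, by simpa using hn⟩)
    ((convex_halfSpace_le (innerSL ℝ n).isLinear c).convexHull_subset_iff.2 hs)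
    ((convex_halfSpace_ge (innerSL ℝ n).isLinear c).convexHull_subset_iff.2 ht)

end Separation

local notation "ℝ²" => EuclideanSpace ℝ (Fin 2)

noncomputable section

def lineReflection (a b : ℝ) (hab : a ^ 2 + b ^ 2 = 1) : ℝ² ≃ₗᵢ[ℝ] ℝ² where
  toFun x := !₂[a * x 0 + b * x 1, b * x 0 - a * x 1]
  invFun x := !₂[a * x 0 + b * x 1, b * x 0 - a * x 1]
  map_add' x y := by
    ext i; fin_cases i <;>
      simp only [PiLp.add_apply, Fin.zero_eta, Fin.mk_one, Matrix.cons_val_zero,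
        Matrix.cons_val_one, Matrix.cons_val_fin_one] <;> ring
  map_smul' r x := by
    ext i; fin_cases i <;>
      simp only [PiLp.smul_apply, smul_eq_mul, RingHom.id_apply, Fin.zero_eta, Fin.mk_one,
        Matrix.cons_val_zero, Matrix.cons_val_one, Matrix.cons_val_fin_one] <;> ring
  left_inv x := by
    ext i; fin_cases i <;>
      simp only [Fin.zero_eta, Fin.mk_one, Matrix.cons_val_zero, Matrix.cons_val_one,
        Matrix.cons_val_fin_one]
    · linear_combination x 0 * hab
    · linear_combination x 1 * hab
  right_inv x := by
    ext i; fin_cases i <;>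
      simp only [Fin.zero_eta, Fin.mk_one, Matrix.cons_val_zero, Matrix.cons_val_one,
        Matrix.cons_val_fin_one]
    · linear_combination x 0 * hab
    · linear_combination x 1 * hab
  norm_map' x := by
    simp only [EuclideanSpace.norm_eq, Fin.sum_univ_two]
    congr 1
    simp only [LinearEquiv.coe_mk, LinearMap.coe_mk, AddHom.coe_mk, PiLp.toLp_apply,
      Matrix.cons_val_zero, Matrix.cons_val_one, Real.norm_eq_abs, sq_abs]
    linear_combination (x 0 ^ 2 + x 1 ^ 2) * hab

def glideReflection (a b : ℝ) (hab : a ^ 2 + b ^ 2 = 1) (t : ℝ²) : ℝ² ≃ᵃⁱ[ℝ] ℝ² :=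
  (lineReflection a b hab).toAffineIsometryEquiv.trans (AffineIsometryEquiv.constVAdd ℝ ℝ² t)

theorem glideReflection_apply (a b : ℝ) (hab : a ^ 2 + b ^ 2 = 1) (t x : ℝ²) :
    glideReflection a b hab t x = t + !₂[a * x 0 + b * x 1, b * x 0 - a * x 1] :=
  rfl

theorem div_sqrt_five_sq_add_sq {p q : ℝ} (hpq : p ^ 2 + q ^ 2 = 5) :
    (p / √5) ^ 2 + (q / √5) ^ 2 = 1 := by
  rw [div_pow, div_pow, Real.sq_sqrt (by norm_num), ← add_div, hpq, div_self (by norm_num)]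

def pinwheelGlide (p q : ℝ) (hpq : p ^ 2 + q ^ 2 = 5) (τ : ℝ²) : ℝ² ≃ᵃⁱ[ℝ] ℝ² :=
  glideReflection (p / √5) (q / √5) (div_sqrt_five_sq_add_sq hpq) (√5 • τ)

theorem pinwheelGlide_apply (p q : ℝ) (hpq : p ^ 2 + q ^ 2 = 5) (τ x : ℝ²) :
    pinwheelGlide p q hpq τ x =
      √5 • (τ + (1 / 5 : ℝ) • !₂[p * x 0 + q * x 1, q * x 0 - p * x 1]) := by
  have h5 : √5 ^ 2 = 5 := Real.sq_sqrt (by norm_num)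
  have h5' : √5 ≠ 0 := by positivity
  ext i
  fin_cases i <;>
    simp only [pinwheelGlide, glideReflection_apply, PiLp.add_apply, PiLp.smul_apply, smul_eq_mul,
      Fin.zero_eta, Fin.mk_one, Matrix.cons_val_zero, Matrix.cons_val_one,
      Matrix.cons_val_fin_one] <;>
    field_simp <;> rw [h5] <;> ring

theorem image_pinwheelGlide (p q : ℝ) (hpq : p ^ 2 + q ^ 2 = 5) (τ : ℝ²) :
    pinwheelGlide p q hpq τ '' pinwheelTriangle =
      √5 • convexHull ℝ {τ, τ + !₂[2 * p / 5, 2 * q / 5], τ + !₂[q / 5, -p / 5]} := by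
  obtain ⟨h₀, h₁, h₂⟩ : pinwheelGlide p q hpq τ !₂[0, 0] = √5 • τ ∧
      pinwheelGlide p q hpq τ !₂[2, 0] = √5 • (τ + !₂[2 * p / 5, 2 * q / 5]) ∧
      pinwheelGlide p q hpq τ !₂[0, 1] = √5 • (τ + !₂[q / 5, -p / 5]) := by
    refine ⟨?_, ?_, ?_⟩ <;> ext i <;> fin_cases i <;>
      simp only [pinwheelGlide_apply, PiLp.add_apply, PiLp.smul_apply, smul_eq_mul, Fin.zero_eta,
        Fin.mk_one, Matrix.cons_val_zero, Matrix.cons_val_one,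
        Matrix.cons_val_fin_one] <;> ring
  rw [pinwheelTriangle, ← AffineIsometryEquiv.coe_toAffineEquiv, ← AffineEquiv.coe_toAffineMap,
    AffineMap.image_convexHull, ← convexHull_smul]
  simp only [image_insert_eq, image_singleton, smul_set_insert, smul_set_singleton,
    AffineEquiv.coe_toAffineMap, AffineIsometryEquiv.coe_toAffineEquiv, h₀, h₁, h₂]

/-- The piece of `T` at `(0, 1)` cut off by the altitude with foot `(2/5, 4/5)`, then the corner
triangles of the larger piece at `(2/5, 4/5)`, `(2, 0)`, `(0, 0)` and its medial triangle. -/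
def pinwheelTile : Fin 5 → Set ℝ² := ![
  convexHull ℝ {!₂[2/5, 4/5], !₂[0, 0], !₂[0, 1]},
  convexHull ℝ {!₂[2/5, 4/5], !₂[6/5, 2/5], !₂[1/5, 2/5]},
  convexHull ℝ {!₂[6/5, 2/5], !₂[2, 0], !₂[1, 0]},
  convexHull ℝ {!₂[1/5, 2/5], !₂[1, 0], !₂[0, 0]},
  convexHull ℝ {!₂[1, 0], !₂[1/5, 2/5], !₂[6/5, 2/5]}]

def pinwheelIsometry : Fin 5 → ℝ² ≃ᵃⁱ[ℝ] ℝ² := ![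
  pinwheelGlide (-1) (-2) (by norm_num) !₂[2/5, 4/5],
  pinwheelGlide 2 (-1) (by norm_num) !₂[2/5, 4/5],
  pinwheelGlide 2 (-1) (by norm_num) !₂[6/5, 2/5],
  pinwheelGlide 2 (-1) (by norm_num) !₂[1/5, 2/5],
  pinwheelGlide (-2) 1 (by norm_num) !₂[1, 0]]

theorem image_pinwheelIsometry (i : Fin 5) :
    pinwheelIsometry i '' pinwheelTriangle = √5 • pinwheelTile i := by
  fin_cases i <;>
    simp only [pinwheelIsometry, pinwheelTile, Fin.zero_eta, Fin.mk_one, Fin.reduceFinMk,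
      Matrix.cons_val, image_pinwheelGlide] <;>
    norm_num [← WithLp.toLp_add]

theorem iUnion_pinwheelTile : ⋃ i, pinwheelTile i = pinwheelTriangle := by
  have hfoot : (!₂[2/5, 4/5] : ℝ²) ∈ segment ℝ !₂[2, 0] !₂[0, 1] :=
    ⟨1/5, 4/5, by norm_num, by norm_num, by norm_num,
      by norm_num [← WithLp.toLp_add, ← WithLp.toLp_smul]⟩
  have midpoint_toLp (a b c d : ℝ) :
      midpoint ℝ (!₂[a, b] : ℝ²) !₂[c, d] = !₂[(a + c) / 2, (b + d) / 2] := by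
    simp only [midpoint_eq_smul_add, invOf_eq_inv, ← WithLp.toLp_add, ← WithLp.toLp_smul,
      Matrix.cons_add_cons, Matrix.smul_cons, Matrix.empty_add_empty, Matrix.smul_empty,
      smul_eq_mul]
    ring_nf
  rw [pinwheelTriangle, convexHull_triple_eq_union_of_mem_segment _ hfoot,
    convexHull_triple_eq_medial_union]
  norm_num only [midpoint_toLp]
  ext x
  simp only [pinwheelTile, one_div, mem_iUnion, Fin.exists_fin_succ,
    Matrix.cons_val_zero, Matrix.cons_val_succ, Matrix.cons_val_fin_one, exists_const, mem_union]
  tauto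

theorem pairwise_disjoint_interior_pinwheelTile :
    Pairwise (Disjoint on fun i => interior (pinwheelTile i)) := by
  rw [pairwise_disjoint_on]
  intro i j hij
  -- one separating line `⟪n, x⟫ = c` for each pair `i < j`, in lexicographic order
  fin_cases i <;> fin_cases j <;> norm_num at hij <;> simp only [pinwheelTile] <;>
    [apply disjoint_interior_convexHull_of_inner_le (n := !₂[2, -1]) (c := 0);
      apply disjoint_interior_convexHull_of_inner_le (n := !₂[2, -1]) (c := 0);
      apply disjoint_interior_convexHull_of_inner_le (n := !₂[2, -1]) (c := 0);
      apply disjoint_interior_convexHull_of_inner_le (n := !₂[2, -1]) (c := 0);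
      apply disjoint_interior_convexHull_of_inner_le (n := !₂[2, -1]) (c := 2);
      apply disjoint_interior_convexHull_of_inner_le (n := !₂[0, -1]) (c := -2/5);
      apply disjoint_interior_convexHull_of_inner_le (n := !₂[0, -1]) (c := -2/5);
      apply disjoint_interior_convexHull_of_inner_le (n := !₂[-2, 1]) (c := -2);
      apply disjoint_interior_convexHull_of_inner_le (n := !₂[-2, 1]) (c := -2);
      apply disjoint_interior_convexHull_of_inner_le (n := !₂[1, 2]) (c := 1)] <;>
    norm_num [PiLp.inner_apply, Fin.sum_univ_two]

end

/-- There are five isometries of the Euclidean plane whose images of the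
(1,2,√5) right triangle have pairwise disjoint interiors and together tile the
√5-fold inflation of the triangle. -/
theorem pinwheel_substitution :
    ∃ g : Fin 5 → (EuclideanSpace ℝ (Fin 2) ≃ᵢ EuclideanSpace ℝ (Fin 2)),
      (∀ i j : Fin 5, i ≠ j →
        interior (g i '' pinwheelTriangle) ∩ interior (g j '' pinwheelTriangle) = ∅) ∧
      (⋃ i : Fin 5, g i '' pinwheelTriangle) =
        (fun x => Real.sqrt 5 • x) '' pinwheelTriangle := by
  have h5 : √5 ≠ 0 := by positivity
  refine ⟨fun i => (pinwheelIsometry i).toIsometryEquiv, fun i j hij => ?_, ?_⟩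
  · simp only [AffineIsometryEquiv.coe_toIsometryEquiv, image_pinwheelIsometry, interior_smul₀ h5]
    exact disjoint_iff_inter_eq_empty.1 <| (disjoint_image_iff (smul_right_injective _ h5)).2 <|
      pairwise_disjoint_interior_pinwheelTile hij
  · simp only [AffineIsometryEquiv.coe_toIsometryEquiv, image_pinwheelIsometry, ← smul_set_iUnion,
      iUnion_pinwheelTile]
    rfl
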